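/- Let P be the n×3 matrix with rows (xᵢ, yᵢ, 1). Then det(Pᵀ P) = n · (S_xx S_yy - S_xy²), where S_xx = Σ(xᵢ - x̄)², S_yy = Σ(yᵢ - ȳ)², S_xy = Σ(xᵢ - x̄)(yᵢ - ȳ), and x̄, ȳ are the means. -/

import Mathlib

open Matrix Finset

theorem gram_det_centered_moments (n : ℕ) (hn : 1 ≤ n) (x y : Fin n → ℝ)
    (P : Matrix (Fin n) (Fin 3) ℝ)
    (hP : P = Matrix.of fun i => ![x i, y i, 1])
    (xbar ybar Sxx Syy Sxy : ℝ)
    (hxbar : xbar = (∑ i, x i) / n) (hybar : ybar = (∑ i, y i) / n)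
    (hSxx : Sxx = ∑ i, (x i - xbar) ^ 2)
    (hSyy : Syy = ∑ i, (y i - ybar) ^ 2)
    (hSxy : Sxy = ∑ i, (x i - xbar) * (y i - ybar)) :
    (Pᵀ * P).det = n * (Sxx * Syy - Sxy ^ 2) := by
  have hn0 : (n : ℝ) ≠ 0 := by positivity
  have hcard : ((Finset.univ : Finset (Fin n)).card : ℝ) = n := by simp
  subst hP hxbar hybar hSxx hSyy hSxy
  set Sx := ∑ i, x i with hSx
  set Sy := ∑ i, y i with hSy
  have hA : ∀ i : Fin n, (x i - Sx / n) ^ 2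
      = x i ^ 2 - 2 * (Sx / n) * x i + (Sx / n) ^ 2 := fun i => by ring
  have hB : ∀ i : Fin n, (y i - Sy / n) ^ 2
      = y i ^ 2 - 2 * (Sy / n) * y i + (Sy / n) ^ 2 := fun i => by ring
  have hC : ∀ i : Fin n, (x i - Sx / n) * (y i - Sy / n)
      = x i * y i - (Sy / n) * x i - (Sx / n) * y i + (Sx / n) * (Sy / n) :=
    fun i => by ring
  rw [Finset.sum_congr rfl fun i _ => hA i, Finset.sum_congr rfl fun i _ => hB i,
    Finset.sum_congr rfl fun i _ => hC i]
  simp only [Finset.sum_add_distrib, Finset.sum_sub_distrib, ← Finset.mul_sum,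
    Finset.sum_const, nsmul_eq_mul]
  rw [Matrix.det_fin_three]
  simp only [Matrix.mul_apply, Matrix.transpose_apply, Matrix.of_apply,
    Matrix.cons_val_zero, Matrix.cons_val_one, Matrix.head_cons,
    Matrix.cons_val_two, Matrix.tail_cons]
  rw [← hSx, ← hSy]
  have e1 : ∑ i, x i * x i = ∑ i, x i ^ 2 := by
    refine Finset.sum_congr rfl fun i _ => by ring
  have e2 : ∑ i, y i * y i = ∑ i, y i ^ 2 := by
    refine Finset.sum_congr rfl fun i _ => by ring
  have e3 : ∑ i, y i * x i = ∑ i, x i * y i := by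
    refine Finset.sum_congr rfl fun i _ => by ring
  simp only [mul_one, one_mul, e1, e2, e3, Finset.sum_const, nsmul_eq_mul]
  field_simp
  rw [hcard, hSx, hSy]
  ring
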